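/- Let Γ ∈ ℝ^{p×m} have rank r, and let β > 0 satisfy β‖P_Γ(Δ)‖_F ≤ ‖Δ‖_{L2(Π)} for all Δ ∈ K(Γ; 3). Then every Δ ∈ K(Γ; 3) satisfies ‖Δ‖_* ≤ (4√(2r)/β) ‖Δ‖_{L2(Π)}. -/

import Mathlib

open Matrix MeasureTheory
open scoped BigOperators

noncomputable section

/-- Frobenius norm. -/
def froNorm {n m : ℕ} (A : Matrix (Fin n) (Fin m) ℝ) : ℝ :=
  Real.sqrt (∑ i, ∑ j, (A i j) ^ 2)

/-- Nuclear norm: sum of singular values (= sqrt of eigenvalues of AᵀA). -/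
def nucNorm {n m : ℕ} (A : Matrix (Fin n) (Fin m) ℝ) : ℝ :=
  ∑ j, Real.sqrt (((by simpa only [Matrix.conjTranspose_eq_transpose_of_trivial] using
    Matrix.isHermitian_conjTranspose_mul_self A : (Aᵀ * A).IsHermitian)).eigenvalues j)

/-- ‖S‖_{L2(Π)} = sqrt( m⁻¹ E_Π ‖SᵀX‖₂² ). -/
def L2Pi {p m : ℕ} (Pix : Measure (Fin p → ℝ)) (S : Matrix (Fin p) (Fin m) ℝ) : ℝ :=
  Real.sqrt ((m : ℝ)⁻¹ * ∫ x, (∑ j, (∑ k, x k * S k j) ^ 2) ∂Pix)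

/-- P_Γ^⊥(S) = (I − P₁) S (I − P₂). -/
def Pperp {p m : ℕ} (P₁ : Matrix (Fin p) (Fin p) ℝ) (P₂ : Matrix (Fin m) (Fin m) ℝ)
    (S : Matrix (Fin p) (Fin m) ℝ) : Matrix (Fin p) (Fin m) ℝ :=
  (1 - P₁) * S * (1 - P₂)

/-- P_Γ(S) = S − (I − P₁) S (I − P₂). -/
def Pproj {p m : ℕ} (P₁ : Matrix (Fin p) (Fin p) ℝ) (P₂ : Matrix (Fin m) (Fin m) ℝ)
    (S : Matrix (Fin p) (Fin m) ℝ) : Matrix (Fin p) (Fin m) ℝ :=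
  S - Pperp P₁ P₂ S

/-- The cone K(Γ; c₀) = {S : ‖P_Γ^⊥(S)‖_* ≤ c₀‖P_Γ(S)‖_*}. -/
def coneK {p m : ℕ} (P₁ : Matrix (Fin p) (Fin p) ℝ) (P₂ : Matrix (Fin m) (Fin m) ℝ)
    (c₀ : ℝ) : Set (Matrix (Fin p) (Fin m) ℝ) :=
  {S | nucNorm (Pperp P₁ P₂ S) ≤ c₀ * nucNorm (Pproj P₁ P₂ S)}

/-! The cone condition and the triangle inequality for `‖·‖_*` give `‖Δ‖_* ≤ 4 ‖P_Γ(Δ)‖_*`.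
Since `P_Γ(Δ) = P₁ Δ + P₁^⊥ Δ P₂` has rank at most `2r`, Cauchy–Schwarz over its nonzero
singular values gives `‖P_Γ(Δ)‖_* ≤ √(2r) ‖P_Γ(Δ)‖_F`, and the hypothesis on `β` bounds the
latter by `‖Δ‖_{L2(Π)} / β`.

The triangle inequality for the nuclear norm comes from its dual description: `‖A‖_*` is the
maximum of `tr(Qᵀ A)` over contractions `Q` (i.e. `1 - Qᵀ Q ⪰ 0`). Writing `V` for an orthogonal
matrix of eigenvectors of `Aᵀ A` with eigenvalues `σₖ²`, the columns of `A V` are orthogonal with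
norms `σₖ`, which bounds `tr(Qᵀ A) = tr((Q V)ᵀ (A V))` column by column, and the maximum is
attained at `Q = A V diag(σₖ⁻¹) Vᵀ` (with `0⁻¹ = 0`). -/

open Finset

namespace Matrix

theorem trace_transpose_mul_mul_of_mul_transpose_eq_one {ι κ η R : Type*} [Fintype ι]
    [Fintype κ] [DecidableEq κ] [Fintype η] [CommRing R] {V : Matrix κ η R} (hV : V * Vᵀ = 1)
    (M N : Matrix ι κ R) : ((M * V)ᵀ * (N * V)).trace = (Mᵀ * N).trace := by
  rw [transpose_mul, Matrix.mul_assoc, trace_mul_comm, Matrix.mul_assoc, Matrix.mul_assoc, hV,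
    Matrix.mul_one]

theorem sum_sq_apply_eq_transpose_mul_self_apply {ι κ : Type*} [Fintype ι] (B : Matrix ι κ ℝ)
    (k : κ) : ∑ i, B i k ^ 2 = (Bᵀ * B) k k := by
  simp only [mul_apply, transpose_apply, sq]

theorem sum_sq_mul_apply_le_one {ι κ η : Type*} [Fintype ι] [Fintype κ] [DecidableEq κ]
    [Fintype η] [DecidableEq η] {Q : Matrix ι κ ℝ} (hQ : (1 - Qᵀ * Q).PosSemidef)
    {V : Matrix κ η ℝ} (hV : Vᵀ * V = 1) (k : η) : ∑ i, (Q * V) i k ^ 2 ≤ 1 := by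
  have h := (hQ.conjTranspose_mul_mul_same V).diag_nonneg (i := k)
  rw [conjTranspose_eq_transpose_of_trivial, Matrix.mul_sub, Matrix.sub_mul, Matrix.mul_one, hV,
    ← Matrix.mul_assoc, Matrix.mul_assoc _ Q, ← transpose_mul] at h
  rw [sum_sq_apply_eq_transpose_mul_self_apply]
  simpa using h

theorem rank_add_le {ι κ K : Type*} [Fintype ι] [Fintype κ] [Field K] (X Y : Matrix ι κ K) :
    (X + Y).rank ≤ X.rank + Y.rank := by
  have hrange : LinearMap.range (X + Y).mulVecLin ≤
      LinearMap.range X.mulVecLin ⊔ LinearMap.range Y.mulVecLin := by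
    rintro _ ⟨v, rfl⟩
    rw [mulVecLin_apply, add_mulVec]
    exact Submodule.add_mem_sup ⟨v, rfl⟩ ⟨v, rfl⟩
  exact (Submodule.finrank_mono hrange).trans (Submodule.finrank_add_le_finrank_add_finrank _ _)

theorem rank_le_of_mulVec_eq_self_iff {ι κ K : Type*} [Fintype ι] [Fintype κ] [Field K]
    {P : Matrix ι ι K} {G : Matrix ι κ K} (hP : P * P = P)
    (hPG : ∀ v, P *ᵥ v = v ↔ v ∈ Set.range G.mulVec) : P.rank ≤ G.rank := by
  refine Submodule.finrank_mono ?_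
  rintro _ ⟨v, rfl⟩
  exact (hPG _).mp (by rw [mulVecLin_apply, mulVec_mulVec, hP])

section SingularValues

variable {p m : ℕ} (A : Matrix (Fin p) (Fin m) ℝ)

theorem isHermitian_transpose_mul_self : (Aᵀ * A).IsHermitian := by
  simpa only [conjTranspose_eq_transpose_of_trivial] using isHermitian_conjTranspose_mul_self A

def rightSingularVectors : Matrix (Fin m) (Fin m) ℝ :=
  A.isHermitian_transpose_mul_self.eigenvectorUnitary

def singularValuesSq : Fin m → ℝ :=
  A.isHermitian_transpose_mul_self.eigenvalues

theorem nucNorm_eq_sum_sqrt_singularValuesSq :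
    nucNorm A = ∑ k, √(A.singularValuesSq k) := rfl

theorem rightSingularVectors_mul_transpose :
    A.rightSingularVectors * A.rightSingularVectorsᵀ = 1 :=
  mem_unitaryGroup_iff.mp A.isHermitian_transpose_mul_self.eigenvectorUnitary.2

theorem transpose_rightSingularVectors_mul :
    A.rightSingularVectorsᵀ * A.rightSingularVectors = 1 :=
  mem_unitaryGroup_iff'.mp A.isHermitian_transpose_mul_self.eigenvectorUnitary.2

theorem gram_mul_rightSingularVectors :
    (A * A.rightSingularVectors)ᵀ * (A * A.rightSingularVectors) =
      diagonal A.singularValuesSq := by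
  have h := A.isHermitian_transpose_mul_self.conjStarAlgAut_star_eigenvectorUnitary
  simp only [Unitary.conjStarAlgAut_star_apply, RCLike.ofReal_real_eq_id, Function.id_comp,
    star_eq_conjTranspose, conjTranspose_eq_transpose_of_trivial] at h
  rw [transpose_mul, Matrix.mul_assoc, ← Matrix.mul_assoc Aᵀ, ← Matrix.mul_assoc]
  exact h

theorem sum_sq_mul_rightSingularVectors_apply (k : Fin m) :
    ∑ i, (A * A.rightSingularVectors) i k ^ 2 = A.singularValuesSq k := by
  rw [sum_sq_apply_eq_transpose_mul_self_apply, gram_mul_rightSingularVectors, diagonal_apply_eq]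

theorem singularValuesSq_nonneg (k : Fin m) : 0 ≤ A.singularValuesSq k :=
  (posSemidef_conjTranspose_mul_self A).eigenvalues_nonneg k

theorem sum_singularValuesSq : ∑ k, A.singularValuesSq k = ∑ i, ∑ j, A i j ^ 2 := by
  have h := A.isHermitian_transpose_mul_self.trace_eq_sum_eigenvalues
  simp only [RCLike.ofReal_real_eq_id, id] at h
  rw [singularValuesSq, ← h, trace, Finset.sum_comm]
  simp only [diag_apply, mul_apply, transpose_apply, sq]

theorem card_singularValuesSq_ne_zero : #{k | A.singularValuesSq k ≠ 0} = A.rank := by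
  rw [← rank_conjTranspose_mul_self A, conjTranspose_eq_transpose_of_trivial,
    A.isHermitian_transpose_mul_self.rank_eq_card_non_zero_eigs, Fintype.card_subtype]
  rfl

theorem trace_transpose_mul_le_nucNorm {Q : Matrix (Fin p) (Fin m) ℝ}
    (hQ : (1 - Qᵀ * Q).PosSemidef) : (Qᵀ * A).trace ≤ nucNorm A := by
  set V := A.rightSingularVectors
  calc (Qᵀ * A).trace = ((Q * V)ᵀ * (A * V)).trace :=
        (trace_transpose_mul_mul_of_mul_transpose_eq_one
          A.rightSingularVectors_mul_transpose _ _).symm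
    _ = ∑ k, ∑ i, (Q * V) i k * (A * V) i k := by
        simp only [trace, diag_apply, mul_apply, transpose_apply]
    _ ≤ ∑ k, √(∑ i, (Q * V) i k ^ 2) * √(∑ i, (A * V) i k ^ 2) :=
        sum_le_sum fun k _ ↦ Real.sum_mul_le_sqrt_mul_sqrt _ _ _
    _ ≤ ∑ k, √(A.singularValuesSq k) := sum_le_sum fun k _ ↦ by
        rw [sum_sq_mul_rightSingularVectors_apply]
        exact mul_le_of_le_one_left (Real.sqrt_nonneg _) <| Real.sqrt_le_one.mpr <|
          sum_sq_mul_apply_le_one hQ A.transpose_rightSingularVectors_mul k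

theorem exists_trace_transpose_mul_eq_nucNorm :
    ∃ Q : Matrix (Fin p) (Fin m) ℝ, (1 - Qᵀ * Q).PosSemidef ∧ (Qᵀ * A).trace = nucNorm A := by
  set V := A.rightSingularVectors
  set s := A.singularValuesSq
  have hs : ∀ k, (√(s k))⁻¹ * s k = √(s k) := fun k ↦ by rw [inv_mul_eq_div, Real.div_sqrt]
  set D : Matrix (Fin m) (Fin m) ℝ := diagonal fun k ↦ (√(s k))⁻¹
  refine ⟨A * V * D * Vᵀ, ?contraction, ?trace⟩
  case contraction =>
    have hQQ : (A * V * D * Vᵀ)ᵀ * (A * V * D * Vᵀ) =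
        V * (D * ((A * V)ᵀ * (A * V)) * D) * Vᵀ := by
      simp only [transpose_mul, transpose_transpose, diagonal_transpose, D, Matrix.mul_assoc]
    have h : 1 - (A * V * D * Vᵀ)ᵀ * (A * V * D * Vᵀ) =
        V * diagonal (fun k ↦ 1 - (√(s k))⁻¹ * s k * (√(s k))⁻¹) * Vᵀ := by
      rw [hQQ, gram_mul_rightSingularVectors, diagonal_mul_diagonal, diagonal_mul_diagonal,
        ← diagonal_one, ← diagonal_sub, Matrix.mul_sub, Matrix.sub_mul, diagonal_one,
        Matrix.mul_one, A.rightSingularVectors_mul_transpose]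
    have hdiag : ∀ k, 0 ≤ 1 - (√(s k))⁻¹ * s k * (√(s k))⁻¹ := fun k ↦
      sub_nonneg.mpr (by rw [hs]; exact mul_inv_le_one)
    rw [h]
    simpa only [conjTranspose_eq_transpose_of_trivial] using
      (posSemidef_diagonal_iff.mpr hdiag).mul_mul_conjTranspose_same V
  case trace =>
    calc ((A * V * D * Vᵀ)ᵀ * A).trace = (D * ((A * V)ᵀ * (A * V))).trace := by
          simp only [transpose_mul, transpose_transpose, diagonal_transpose, Matrix.mul_assoc, D]
          rw [trace_mul_comm]
          simp only [Matrix.mul_assoc]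
      _ = nucNorm A := by
          rw [gram_mul_rightSingularVectors, diagonal_mul_diagonal, trace_diagonal]
          exact sum_congr rfl fun k _ ↦ hs k

theorem nucNorm_add_le (X Y : Matrix (Fin p) (Fin m) ℝ) :
    nucNorm (X + Y) ≤ nucNorm X + nucNorm Y := by
  obtain ⟨Q, hQ, hQXY⟩ := exists_trace_transpose_mul_eq_nucNorm (X + Y)
  rw [← hQXY, Matrix.mul_add, trace_add]
  exact add_le_add (X.trace_transpose_mul_le_nucNorm hQ) (Y.trace_transpose_mul_le_nucNorm hQ)

theorem nucNorm_le_sqrt_rank_mul_froNorm : nucNorm A ≤ √A.rank * froNorm A := by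
  rw [nucNorm_eq_sum_sqrt_singularValuesSq]
  set s := A.singularValuesSq
  calc ∑ k, √(s k) = ∑ k with s k ≠ 0, √1 * √(s k) := by
        simp only [Real.sqrt_one, one_mul]
        refine (sum_filter_of_ne fun k _ h hk ↦ ?_).symm
        rw [hk, Real.sqrt_zero] at h
        exact h rfl
    _ ≤ √(∑ k with s k ≠ 0, (1 : ℝ)) * √(∑ k with s k ≠ 0, s k) :=
        Real.sum_sqrt_mul_sqrt_le _ (fun _ ↦ zero_le_one) A.singularValuesSq_nonneg
    _ = √A.rank * froNorm A := by
        rw [sum_const, card_singularValuesSq_ne_zero, sum_filter_ne_zero, sum_singularValuesSq,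
          nsmul_one, froNorm]

end SingularValues

end Matrix

theorem rank_Pproj_le {p m : ℕ} (P₁ : Matrix (Fin p) (Fin p) ℝ) (P₂ : Matrix (Fin m) (Fin m) ℝ)
    (S : Matrix (Fin p) (Fin m) ℝ) : (Pproj P₁ P₂ S).rank ≤ P₁.rank + P₂.rank := by
  have h : Pproj P₁ P₂ S = P₁ * S + (1 - P₁) * S * P₂ := by
    simp only [Pproj, Pperp, Matrix.mul_sub, Matrix.sub_mul, Matrix.mul_one, Matrix.one_mul]
    abel
  rw [h]
  exact (Matrix.rank_add_le _ _).trans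
    (add_le_add (Matrix.rank_mul_le_left _ _) (Matrix.rank_mul_le_right _ _))

theorem nucNorm_le_of_mem_coneK {p m : ℕ} {P₁ : Matrix (Fin p) (Fin p) ℝ}
    {P₂ : Matrix (Fin m) (Fin m) ℝ} {c₀ : ℝ} {S : Matrix (Fin p) (Fin m) ℝ}
    (hS : S ∈ coneK P₁ P₂ c₀) : nucNorm S ≤ (1 + c₀) * nucNorm (Pproj P₁ P₂ S) := by
  have hcone : nucNorm (Pperp P₁ P₂ S) ≤ c₀ * nucNorm (Pproj P₁ P₂ S) := hS
  have hsplit : Pproj P₁ P₂ S + Pperp P₁ P₂ S = S := sub_add_cancel _ _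
  have htri := Matrix.nucNorm_add_le (Pproj P₁ P₂ S) (Pperp P₁ P₂ S)
  rw [hsplit] at htri
  linarith

theorem nuclear_norm_cone_bound_general {p m : ℕ}
    (Pix : Measure (Fin p → ℝ))
    (Γ : Matrix (Fin p) (Fin m) ℝ) (r : ℕ) (hr : Γ.rank = r)
    (P₁ : Matrix (Fin p) (Fin p) ℝ) (P₂ : Matrix (Fin m) (Fin m) ℝ)
    (hP₁idem : P₁ * P₁ = P₁)
    (hP₁range : ∀ v : Fin p → ℝ, P₁.mulVec v = v ↔ v ∈ Set.range Γ.mulVec)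
    (hP₂idem : P₂ * P₂ = P₂)
    (hP₂range : ∀ v : Fin m → ℝ, P₂.mulVec v = v ↔ v ∈ Set.range Γᵀ.mulVec)
    (β : ℝ) (hβ : 0 < β)
    (hβprop : ∀ Δ ∈ coneK P₁ P₂ 3, β * froNorm (Pproj P₁ P₂ Δ) ≤ L2Pi Pix Δ) :
    ∀ Δ ∈ coneK P₁ P₂ 3,
      nucNorm Δ ≤ (4 * Real.sqrt (2 * r) / β) * L2Pi Pix Δ := by
  intro Δ hΔ
  have hrank : ((Pproj P₁ P₂ Δ).rank : ℝ) ≤ 2 * r := by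
    have h₁ := Matrix.rank_le_of_mulVec_eq_self_iff hP₁idem hP₁range
    have h₂ := Matrix.rank_le_of_mulVec_eq_self_iff hP₂idem hP₂range
    rw [Matrix.rank_transpose] at h₂
    exact_mod_cast (rank_Pproj_le P₁ P₂ Δ).trans (by omega)
  have hnuc : nucNorm (Pproj P₁ P₂ Δ) ≤ √(2 * r) * froNorm (Pproj P₁ P₂ Δ) :=
    (Matrix.nucNorm_le_sqrt_rank_mul_froNorm _).trans
      (mul_le_mul_of_nonneg_right (Real.sqrt_le_sqrt hrank) (Real.sqrt_nonneg _))
  have hfro : froNorm (Pproj P₁ P₂ Δ) ≤ L2Pi Pix Δ / β := (le_div_iff₀' hβ).mpr (hβprop Δ hΔ)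
  calc nucNorm Δ ≤ (1 + 3) * nucNorm (Pproj P₁ P₂ Δ) := nucNorm_le_of_mem_coneK hΔ
    _ ≤ (1 + 3) * (√(2 * r) * (L2Pi Pix Δ / β)) := by gcongr; exact hnuc.trans (by gcongr)
    _ = (4 * √(2 * r) / β) * L2Pi Pix Δ := by ring

/-- if rank Γ = r and β > 0 satisfies β‖P_Γ(Δ)‖_F ≤ ‖Δ‖_{L2(Π)} on K(Γ;3),
then every Δ ∈ K(Γ;3) satisfies ‖Δ‖_* ≤ (4√(2r)/β)‖Δ‖_{L2(Π)}. -/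
theorem nuclear_norm_cone_bound {p m : ℕ} (hm : 0 < m)
    (Pix : Measure (Fin p → ℝ)) [IsProbabilityMeasure Pix]
    (Γ : Matrix (Fin p) (Fin m) ℝ) (r : ℕ) (hr : Γ.rank = r)
    (P₁ : Matrix (Fin p) (Fin p) ℝ) (P₂ : Matrix (Fin m) (Fin m) ℝ)
    (hP₁sym : P₁ᵀ = P₁) (hP₁idem : P₁ * P₁ = P₁)
    (hP₁range : ∀ v : Fin p → ℝ, P₁.mulVec v = v ↔ v ∈ Set.range Γ.mulVec)
    (hP₂sym : P₂ᵀ = P₂) (hP₂idem : P₂ * P₂ = P₂)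
    (hP₂range : ∀ v : Fin m → ℝ, P₂.mulVec v = v ↔ v ∈ Set.range Γᵀ.mulVec)
    (β : ℝ) (hβ : 0 < β)
    (hβprop : ∀ Δ ∈ coneK P₁ P₂ 3, β * froNorm (Pproj P₁ P₂ Δ) ≤ L2Pi Pix Δ) :
    ∀ Δ ∈ coneK P₁ P₂ 3,
      nucNorm Δ ≤ (4 * Real.sqrt (2 * r) / β) * L2Pi Pix Δ :=
  nuclear_norm_cone_bound_general Pix Γ r hr P₁ P₂ hP₁idem hP₁range hP₂idem hP₂range β hβ hβprop
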